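/- For every m ≥ 0: d_{pm} = m·Δ_{p−2} + d_m, and for every k with 0 < k < p: d_{pm+k} = m·Δ_{p−2} + Δ_{k−2} + d_m + min{k−1, d_{m+1} − d_m}. -/

import Mathlib

/-!
Reading a digit sequence as an integer, least significant digit first, turns the odometer into
`n ↦ n + 1` and `φ` into `phiNat`, the first base-`p` digit of `n` other than `p - 1`. Almost every
`x` agrees with some integer on a prefix long enough for `m` steps of the odometer, and every
integer is matched by a cylinder of positive measure, so `d_m` is the least value of
`∑_{j<m} phiNat (n + j)` over `n ∈ ℕ`. Cutting the orbit of `n` into blocks of `p` consecutive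
integers, a full block costs `Δ_{p-2}` plus `phiNat` of its index `n / p + i`, which gives
`d_{pm}`. A remaining window of `k < p` integers is cheapest either without a carry, at cost
`Δ_{k-1}` on top of `d_m`, or with the carry at its first step, at cost `Δ_{k-2}` on top of
`d_{m+1}`.
-/

open MeasureTheory
open scoped NNReal ENNReal

namespace Chacon

/-- The space of digit sequences with digits in `{0, …, p-1}`. -/
def Gamma (p : ℕ) : Set (ℕ → ℕ) := {x | ∀ i, x i < p}

/-- `Γ*`: sequences with digits `< p` having infinitely many coordinates `≠ p - 1`. -/
def GammaStar (p : ℕ) : Set (ℕ → ℕ) :=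
  {x | (∀ i, x i < p) ∧ {i | x i ≠ p - 1}.Infinite}

/-- The least index `i` with `x i ≠ p - 1`. -/
noncomputable def firstNot (p : ℕ) (x : ℕ → ℕ) : ℕ :=
  sInf {i | x i ≠ p - 1}

/-- `φ(x) = x_i` where `i` is the least index with `x_i ≠ p - 1`. -/
noncomputable def phi (p : ℕ) (x : ℕ → ℕ) : ℕ :=
  x (firstNot p x)

/-- The odometer `S` (addition of `1` with carry): the initial run of digits
`p - 1` is replaced by zeros, and the first digit `≠ p - 1` is increased by one. -/
noncomputable def odo (p : ℕ) (x : ℕ → ℕ) : ℕ → ℕ :=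
  fun i =>
    if i < firstNot p x then 0
    else if i = firstNot p x then x i + 1
    else x i

/-- `φ^(m)(x) = ∑_{j=0}^{m-1} φ(S^j x)`. -/
noncomputable def phiSum (p m : ℕ) (x : ℕ → ℕ) : ℕ :=
  ∑ j ∈ Finset.range m, phi p ((odo p)^[j] x)

/-- The base-`p` digit sequence of a real number `u`. -/
noncomputable def digitsOf (p : ℕ) (u : ℝ) : ℕ → ℕ :=
  fun i => (⌊u * (p : ℝ) ^ (i + 1)⌋).toNat % p

/-- `λ`: the product probability measure on digit sequences under which the
coordinates are i.i.d., uniformly distributed in `{0, …, p-1}`; it is realized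
concretely as the distribution of the base-`p` digit sequence of a uniformly
distributed random point of `[0,1)`. -/
noncomputable def lam (p : ℕ) : Measure (ℕ → ℕ) :=
  Measure.map (digitsOf p) (volume.restrict (Set.Ico (0 : ℝ) 1))

/-- `π_m(j) = λ({x : φ^(m)(x) = j})`. -/
noncomputable def pim (p m j : ℕ) : ℝ≥0∞ :=
  lam p {x | phiSum p m x = j}

/-- `P_m^p(t) = ∑_{j ≥ 0} π_m(j) t^j`, a real polynomial
(the sum is over `0 ≤ j ≤ m (p-2)` since `0 ≤ φ^(m) ≤ m (p-2)` a.s.). -/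
noncomputable def P (p m : ℕ) (t : ℝ) : ℝ :=
  ∑ j ∈ Finset.range (m * (p - 2) + 1), (pim p m j).toReal * t ^ j

/-- The `n`-th triangular number `Δ_n = n (n+1) / 2`. -/
def tri (n : ℕ) : ℕ := n * (n + 1) / 2

/-- The degree `D_m` of `P_m^p`: the largest `j` with `π_m(j) ≠ 0`. -/
noncomputable def D (p m : ℕ) : ℕ := sSup {j | pim p m j ≠ 0}

/-- The lower degree `d_m` of `P_m^p`: the least `j` with `π_m(j) ≠ 0`. -/
noncomputable def d (p m : ℕ) : ℕ := sInf {j | pim p m j ≠ 0}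

theorem sum_range_id_eq_tri (t : ℕ) : ∑ i ∈ Finset.range t, i = tri (t - 1) := by
  rw [Finset.sum_range_id, tri]
  rcases t with _ | t
  · rfl
  · simp [Nat.mul_comm]

theorem tri_sub_one {k : ℕ} (hk : 0 < k) : tri (k - 1) = tri (k - 2) + (k - 1) := by
  obtain ⟨j, rfl⟩ := Nat.exists_eq_add_of_lt hk
  rw [← sum_range_id_eq_tri, Finset.sum_range_succ, sum_range_id_eq_tri]
  simp

/-- `φ` of the base-`p` digit sequence of `n`, least significant digit first. -/
def phiNat (p n : ℕ) : ℕ :=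
  if h : 2 ≤ p ∧ n % p = p - 1 then
    have : n / p < n := Nat.div_lt_self (Nat.pos_of_ne_zero fun hn => by simp [hn] at h; omega) h.1
    phiNat p (n / p)
  else n % p

theorem phiNat_mul_add {p : ℕ} (hp : 2 ≤ p) (q : ℕ) {b : ℕ} (hb : b < p) :
    phiNat p (p * q + b) = if b = p - 1 then phiNat p q else b := by
  have hmod : (p * q + b) % p = b := by rw [Nat.mul_add_mod, Nat.mod_eq_of_lt hb]
  have hdiv : (p * q + b) / p = q := by
    rw [Nat.mul_add_div (by omega), Nat.div_eq_of_lt hb, Nat.add_zero]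
  rw [phiNat]
  split_ifs <;> simp_all

/-- `φ^(m)` on the orbit of the integer `n` under `n ↦ n + 1`. -/
def phiNatSum (p n m : ℕ) : ℕ := ∑ j ∈ Finset.range m, phiNat p (n + j)

theorem phiNatSum_add (p n a b : ℕ) :
    phiNatSum p n (a + b) = phiNatSum p n a + phiNatSum p (n + a) b := by
  simp only [phiNatSum, Finset.sum_range_add, Nat.add_assoc]

theorem phiNatSum_succ (p n m : ℕ) : phiNatSum p n (m + 1) = phiNatSum p n m + phiNat p (n + m) :=
  Finset.sum_range_succ _ _

theorem phiNatSum_mul_add_of_add_le {p : ℕ} (hp : 2 ≤ p) (q : ℕ) {r k : ℕ} (h : r + k ≤ p - 1) :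
    phiNatSum p (p * q + r) k = ∑ i ∈ Finset.Ico r (r + k), i := by
  rw [Finset.sum_Ico_eq_sum_range, Nat.add_sub_cancel_left]
  refine Finset.sum_congr rfl fun j hj => ?_
  have hj := Finset.mem_range.mp hj
  rw [Nat.add_assoc, phiNat_mul_add hp q (by omega), if_neg (by omega)]

theorem phiNatSum_mul_add_of_le_add {p : ℕ} (hp : 2 ≤ p) (q : ℕ) {r k : ℕ} (hr : r < p)
    (hk : k ≤ p) (h : p ≤ r + k) :
    phiNatSum p (p * q + r) k =
      ∑ i ∈ Finset.Ico r (p - 1), i + phiNat p q + ∑ i ∈ Finset.range (r + k - p), i := by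
  have hsplit : k = (p - 1 - r) + 1 + (r + k - p) := by omega
  generalize r + k - p = s at hsplit ⊢
  subst hsplit
  have hcarry : p * q + r + (p - 1 - r) = p * q + (p - 1) := by omega
  have hnext : p * q + r + (p - 1 - r + 1) = p * (q + 1) + 0 := by rw [Nat.mul_succ]; omega
  rw [phiNatSum_add, phiNatSum_add, phiNatSum_mul_add_of_add_le hp q (by omega),
    hnext, phiNatSum_mul_add_of_add_le hp (q + 1) (by omega), hcarry, phiNatSum,
    Finset.sum_range_one, Nat.add_zero, phiNat_mul_add hp q (by omega), if_pos rfl,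
    Nat.zero_add, ← Finset.range_eq_Ico, show r + (p - 1 - r) = p - 1 by omega]

theorem phiNatSum_self {p : ℕ} (hp : 2 ≤ p) (n : ℕ) :
    phiNatSum p n p = tri (p - 2) + phiNat p (n / p) := by
  have hr : n % p < p := Nat.mod_lt _ (by omega)
  conv_lhs => rw [← Nat.div_add_mod n p]
  rw [phiNatSum_mul_add_of_le_add hp _ hr le_rfl (by omega), Nat.add_sub_cancel,
    show p - 2 = p - 1 - 1 by omega, ← sum_range_id_eq_tri,
    ← Finset.sum_range_add_sum_Ico _ (show n % p ≤ p - 1 by omega)]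
  ring

theorem phiNatSum_length_mul {p : ℕ} (hp : 2 ≤ p) (n m : ℕ) :
    phiNatSum p n (p * m) = m * tri (p - 2) + phiNatSum p (n / p) m := by
  induction m with
  | zero => simp [phiNatSum]
  | succ m ih =>
    rw [Nat.mul_succ, phiNatSum_add, ih, phiNatSum_self hp, Nat.add_mul_div_left _ _ (by omega),
      phiNatSum_succ]
    ring

theorem phiNatSum_length_mul_add {p : ℕ} (hp : 2 ≤ p) (n m k : ℕ) :
    phiNatSum p n (p * m + k) =
      m * tri (p - 2) + phiNatSum p (n / p) m + phiNatSum p (p * (n / p + m) + n % p) k := by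
  have hblock : n + p * m = p * (n / p + m) + n % p := by
    rw [Nat.mul_add]; have := Nat.div_add_mod n p; omega
  rw [phiNatSum_add, phiNatSum_length_mul hp, hblock]

noncomputable def dNat (p m : ℕ) : ℕ := sInf (Set.range fun n => phiNatSum p n m)

theorem dNat_le (p n m : ℕ) : dNat p m ≤ phiNatSum p n m := Nat.sInf_le ⟨n, rfl⟩

theorem exists_phiNatSum_eq_dNat (p m : ℕ) : ∃ n, phiNatSum p n m = dNat p m :=
  Nat.sInf_mem (Set.range_nonempty _)

theorem dNat_le_dNat_succ (p m : ℕ) : dNat p m ≤ dNat p (m + 1) := by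
  obtain ⟨n, hn⟩ := exists_phiNatSum_eq_dNat p (m + 1)
  calc dNat p m ≤ phiNatSum p n m := dNat_le p n m
    _ ≤ phiNatSum p n (m + 1) := by rw [phiNatSum_succ]; omega
    _ = dNat p (m + 1) := hn

theorem dNat_mul {p : ℕ} (hp : 2 ≤ p) (m : ℕ) :
    dNat p (p * m) = m * tri (p - 2) + dNat p m := by
  apply le_antisymm
  · obtain ⟨n, hn⟩ := exists_phiNatSum_eq_dNat p m
    calc dNat p (p * m) ≤ phiNatSum p (p * n) (p * m) := dNat_le _ _ _
      _ = m * tri (p - 2) + dNat p m := by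
          rw [phiNatSum_length_mul hp, Nat.mul_div_cancel_left _ (by omega), hn]
  · obtain ⟨n, hn⟩ := exists_phiNatSum_eq_dNat p (p * m)
    rw [← hn, phiNatSum_length_mul hp]
    exact Nat.add_le_add_left (dNat_le _ _ _) _

theorem le_phiNatSum_length_mul_add {p : ℕ} (hp : 2 ≤ p) (n m : ℕ) {k : ℕ} (hk : 0 < k)
    (hkp : k < p) :
    m * tri (p - 2) + min (dNat p m + tri (k - 1)) (dNat p (m + 1) + tri (k - 2)) ≤
      phiNatSum p n (p * m + k) := by
  have hr : n % p < p := Nat.mod_lt _ (by omega)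
  rw [phiNatSum_length_mul_add hp]
  rcases le_or_gt (n % p + k) (p - 1) with hcarry | hcarry
  · have hwindow : tri (k - 1) ≤ ∑ i ∈ Finset.Ico (n % p) (n % p + k), i := by
      rw [← sum_range_id_eq_tri, Finset.sum_Ico_eq_sum_range, Nat.add_sub_cancel_left]
      exact Finset.sum_le_sum fun j _ => Nat.le_add_left j _
    have := dNat_le p (n / p) m
    rw [phiNatSum_mul_add_of_add_le hp _ hcarry]
    omega
  · -- the `p - 1 - n % p` terms before the carry dominate the top terms of `tri (k - 2)`
    have hwindow : tri (k - 2) ≤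
        ∑ i ∈ Finset.Ico (n % p) (p - 1), i + ∑ i ∈ Finset.range (n % p + k - p), i := by
      rw [show k - 2 = k - 1 - 1 by omega, ← sum_range_id_eq_tri,
        ← Finset.sum_range_add_sum_Ico _ (show n % p + k - p ≤ k - 1 by omega), Nat.add_comm,
        Finset.sum_Ico_eq_sum_range, Finset.sum_Ico_eq_sum_range]
      refine Nat.add_le_add_right (le_of_eq_of_le ?_ (Finset.sum_le_sum fun j _ =>
        Nat.add_le_add_right (show n % p + k - p ≤ n % p by omega) j)) _
      rw [show k - 1 - (n % p + k - p) = p - 1 - n % p by omega]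
    have := dNat_le p (n / p) (m + 1)
    rw [phiNatSum_succ] at this
    rw [phiNatSum_mul_add_of_le_add hp _ hr hkp.le (by omega)]
    omega

theorem dNat_mul_add {p : ℕ} (hp : 2 ≤ p) (m : ℕ) {k : ℕ} (hk : 0 < k) (hkp : k < p) :
    dNat p (p * m + k) =
      m * tri (p - 2) + min (dNat p m + tri (k - 1)) (dNat p (m + 1) + tri (k - 2)) := by
  refine le_antisymm ?_ ?_
  · obtain ⟨n₀, hn₀⟩ := exists_phiNatSum_eq_dNat p m
    obtain ⟨n₁, hn₁⟩ := exists_phiNatSum_eq_dNat p (m + 1)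
    have hno_carry := dNat_le p (p * n₀) (p * m + k)
    have hcarry := dNat_le p (p * n₁ + (p - 1)) (p * m + k)
    rw [phiNatSum_length_mul_add hp, Nat.mul_div_cancel_left _ (by omega), Nat.mul_mod_right,
      phiNatSum_mul_add_of_add_le hp _ (by omega), Nat.zero_add, ← Finset.range_eq_Ico,
      sum_range_id_eq_tri, hn₀] at hno_carry
    have hdiv : (p * n₁ + (p - 1)) / p = n₁ := by
      rw [Nat.mul_add_div (by omega), Nat.div_eq_of_lt (by omega), Nat.add_zero]
    have hmod : (p * n₁ + (p - 1)) % p = p - 1 := by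
      rw [Nat.mul_add_mod, Nat.mod_eq_of_lt (by omega)]
    rw [phiNatSum_length_mul_add hp, hdiv, hmod, phiNatSum_mul_add_of_le_add hp _ (by omega) hkp.le
      (by omega), Finset.Ico_self, Finset.sum_empty, Nat.zero_add, sum_range_id_eq_tri,
      show p - 1 + k - p - 1 = k - 2 by omega] at hcarry
    have := phiNatSum_succ p n₁ m
    omega
  · obtain ⟨n, hn⟩ := exists_phiNatSum_eq_dNat p (p * m + k)
    exact hn ▸ le_phiNatSum_length_mul_add hp n m hk hkp

theorem firstNot_eq_zero {p : ℕ} {x : ℕ → ℕ} (h : x 0 ≠ p - 1) : firstNot p x = 0 :=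
  Nat.eq_zero_of_le_zero (Nat.sInf_le h)

theorem firstNot_eq_succ {p : ℕ} {x : ℕ → ℕ} (h₀ : x 0 = p - 1) (h : ∃ i, x i ≠ p - 1) :
    firstNot p x = firstNot p (fun i => x (i + 1)) + 1 := by
  have hx : x (firstNot p x) ≠ p - 1 := Nat.sInf_mem h
  obtain ⟨i, hi⟩ := Nat.exists_eq_succ_of_ne_zero fun h0 : firstNot p x = 0 => hx (h0 ▸ h₀)
  have htail : x (i + 1) ≠ p - 1 := by simpa [hi] using hx
  have hle : firstNot p (fun i => x (i + 1)) ≤ i := Nat.sInf_le htail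
  have hge : firstNot p x ≤ firstNot p (fun i => x (i + 1)) + 1 :=
    Nat.sInf_le (Nat.sInf_mem (s := {i | x (i + 1) ≠ p - 1}) ⟨i, htail⟩)
  omega

theorem phi_of_ne {p : ℕ} {x : ℕ → ℕ} (h : x 0 ≠ p - 1) : phi p x = x 0 := by
  rw [phi, firstNot_eq_zero h]

theorem phi_of_eq {p : ℕ} {x : ℕ → ℕ} (h₀ : x 0 = p - 1) (h : ∃ i, x i ≠ p - 1) :
    phi p x = phi p (fun i => x (i + 1)) := by
  rw [phi, phi, firstNot_eq_succ h₀ h]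

theorem odo_zero_of_ne {p : ℕ} {x : ℕ → ℕ} (h : x 0 ≠ p - 1) : odo p x 0 = x 0 + 1 := by
  simp [odo, firstNot_eq_zero h]

theorem odo_tail_of_ne {p : ℕ} {x : ℕ → ℕ} (h : x 0 ≠ p - 1) :
    (fun i => odo p x (i + 1)) = fun i => x (i + 1) := by
  simp [odo, firstNot_eq_zero h]

theorem odo_zero_of_eq {p : ℕ} {x : ℕ → ℕ} (h₀ : x 0 = p - 1) (h : ∃ i, x i ≠ p - 1) :
    odo p x 0 = 0 := by
  simp [odo, firstNot_eq_succ h₀ h]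

theorem odo_tail_of_eq {p : ℕ} {x : ℕ → ℕ} (h₀ : x 0 = p - 1) (h : ∃ i, x i ≠ p - 1) :
    (fun i => odo p x (i + 1)) = odo p (fun i => x (i + 1)) := by
  funext i
  simp [odo, firstNot_eq_succ h₀ h]

def prefixVal (p : ℕ) (x : ℕ → ℕ) (L : ℕ) : ℕ := ∑ i ∈ Finset.range L, x i * p ^ i

theorem prefixVal_congr {p : ℕ} {x y : ℕ → ℕ} {L : ℕ} (h : ∀ i < L, x i = y i) :
    prefixVal p x L = prefixVal p y L :=
  Finset.sum_congr rfl fun i hi => by rw [h i (Finset.mem_range.mp hi)]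

theorem prefixVal_succ (p : ℕ) (x : ℕ → ℕ) (L : ℕ) :
    prefixVal p x (L + 1) = prefixVal p x L + x L * p ^ L :=
  Finset.sum_range_succ _ _

theorem prefixVal_succ' (p : ℕ) (x : ℕ → ℕ) (L : ℕ) :
    prefixVal p x (L + 1) = x 0 + p * prefixVal p (fun i => x (i + 1)) L := by
  simp only [prefixVal, Finset.sum_range_succ', Finset.mul_sum, pow_zero, mul_one, add_comm (x 0)]
  exact congrArg (· + x 0) (Finset.sum_congr rfl fun i _ => by ring)

theorem prefixVal_lt {p : ℕ} {x : ℕ → ℕ} {L : ℕ} (hx : ∀ i < L, x i < p) :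
    prefixVal p x L < p ^ L := by
  induction L with
  | zero => simp [prefixVal]
  | succ L ih =>
    rw [prefixVal_succ, pow_succ]
    have := ih fun i hi => hx i (by omega)
    nlinarith [hx L (by omega)]

theorem prefixVal_tail_add_one_lt {p : ℕ} {x : ℕ → ℕ} {L : ℕ} (h₀ : x 0 = p - 1)
    (hv : prefixVal p x (L + 1) + 1 < p ^ (L + 1)) :
    prefixVal p (fun i => x (i + 1)) L + 1 < p ^ L := by
  rw [prefixVal_succ', h₀, pow_succ] at hv
  have hlt : p * (prefixVal p (fun i => x (i + 1)) L + 1) < p * p ^ L := by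
    rw [Nat.mul_succ, mul_comm p (p ^ L)]; omega
  exact Nat.lt_of_mul_lt_mul_left hlt

theorem exists_ne_of_prefixVal_add_one_lt {p : ℕ} {x : ℕ → ℕ} {L : ℕ}
    (hv : prefixVal p x L + 1 < p ^ L) : ∃ i, x i ≠ p - 1 := by
  induction L generalizing x with
  | zero => simp [prefixVal] at hv
  | succ L ih =>
    by_cases h₀ : x 0 = p - 1
    · obtain ⟨i, hi⟩ := ih (prefixVal_tail_add_one_lt h₀ hv)
      exact ⟨i + 1, hi⟩
    · exact ⟨0, h₀⟩

theorem phi_eq_phiNat_prefixVal {p : ℕ} (hp : 2 ≤ p) {x : ℕ → ℕ} {L : ℕ}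
    (hx : ∀ i < L, x i < p) (hv : prefixVal p x L + 1 < p ^ L) :
    phi p x = phiNat p (prefixVal p x L) := by
  induction L generalizing x with
  | zero => simp [prefixVal] at hv
  | succ L ih =>
    rw [prefixVal_succ', add_comm, phiNat_mul_add hp _ (hx 0 (by omega))]
    by_cases h₀ : x 0 = p - 1
    · rw [if_pos h₀, phi_of_eq h₀ (exists_ne_of_prefixVal_add_one_lt hv)]
      exact ih (fun i hi => hx (i + 1) (by omega)) (prefixVal_tail_add_one_lt h₀ hv)
    · rw [if_neg h₀, phi_of_ne h₀]

theorem prefixVal_odo {p : ℕ} {x : ℕ → ℕ} {L : ℕ} (hx : ∀ i < L, x i < p)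
    (hv : prefixVal p x L + 1 < p ^ L) :
    (∀ i < L, odo p x i < p) ∧ prefixVal p (odo p x) L = prefixVal p x L + 1 := by
  induction L generalizing x with
  | zero => simp [prefixVal] at hv
  | succ L ih =>
    by_cases h₀ : x 0 = p - 1
    · have hne := exists_ne_of_prefixVal_add_one_lt hv
      obtain ⟨hdig, hval⟩ :=
        ih (fun i hi => hx (i + 1) (by omega)) (prefixVal_tail_add_one_lt h₀ hv)
      refine ⟨?_, ?_⟩
      · rintro (_ | i) hi
        · rw [odo_zero_of_eq h₀ hne]; have := hx 0 (by omega); omega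
        · exact (congrFun (odo_tail_of_eq h₀ hne) i).trans_lt (hdig i (by omega))
      · rw [prefixVal_succ', prefixVal_succ', odo_zero_of_eq h₀ hne, odo_tail_of_eq h₀ hne, hval,
          h₀, mul_add]
        have := hx 0 (by omega)
        omega
    · refine ⟨?_, ?_⟩
      · rintro (_ | i) hi
        · rw [odo_zero_of_ne h₀]; have := hx 0 (by omega); omega
        · exact (congrFun (odo_tail_of_ne h₀) i).trans_lt (hx (i + 1) hi)
      · rw [prefixVal_succ', prefixVal_succ', odo_zero_of_ne h₀, odo_tail_of_ne h₀]
        omega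

theorem prefixVal_iterate_odo {p : ℕ} {x : ℕ → ℕ} {L : ℕ} (hx : ∀ i < L, x i < p) {j : ℕ}
    (hv : prefixVal p x L + j < p ^ L) :
    (∀ i < L, (odo p)^[j] x i < p) ∧ prefixVal p ((odo p)^[j] x) L = prefixVal p x L + j := by
  induction j with
  | zero => exact ⟨hx, rfl⟩
  | succ j ih =>
    obtain ⟨hdig, hval⟩ := ih (by omega)
    rw [Function.iterate_succ_apply', ← Nat.add_assoc, ← hval]
    exact prefixVal_odo hdig (by omega)

theorem phiSum_eq_phiNatSum {p : ℕ} (hp : 2 ≤ p) {x : ℕ → ℕ} {L m : ℕ} (hx : ∀ i < L, x i < p)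
    (hv : prefixVal p x L + m < p ^ L) :
    phiSum p m x = phiNatSum p (prefixVal p x L) m := by
  refine Finset.sum_congr rfl fun j hj => ?_
  have hj := Finset.mem_range.mp hj
  obtain ⟨hdig, hval⟩ := prefixVal_iterate_odo hx (j := j) (by omega)
  rw [phi_eq_phiNat_prefixVal hp hdig (by omega), hval]

theorem digitsOf_lt {p : ℕ} (hp : 0 < p) (u : ℝ) (i : ℕ) : digitsOf p u i < p :=
  Nat.mod_lt _ hp

theorem digitsOf_eq_floor_mod (p : ℕ) (u : ℝ) (i : ℕ) :
    digitsOf p u i = ⌊u * (p : ℝ) ^ (i + 1)⌋₊ % p := by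
  rw [digitsOf, Int.floor_toNat]

theorem floor_mul_pow_add_div (p : ℕ) (u : ℝ) (k t : ℕ) (hp : p ≠ 0) :
    ⌊u * (p : ℝ) ^ (k + t)⌋₊ / p ^ t = ⌊u * (p : ℝ) ^ k⌋₊ := by
  rw [← Nat.floor_div_natCast, Nat.cast_pow, pow_add, ← mul_assoc,
    mul_div_cancel_right₀ _ (pow_ne_zero _ (Nat.cast_ne_zero.mpr hp))]

theorem digitsOf_eq_of_floor_eq {p : ℕ} (hp : p ≠ 0) {u : ℝ} {L R : ℕ}
    (hR : ⌊u * (p : ℝ) ^ L⌋₊ = R) {i : ℕ} (hi : i < L) :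
    digitsOf p u i = R / p ^ (L - 1 - i) % p := by
  rw [digitsOf_eq_floor_mod, ← hR, ← floor_mul_pow_add_div p u (i + 1) (L - 1 - i) hp,
    show i + 1 + (L - 1 - i) = L by omega]

theorem exists_digitsOf_ne {p : ℕ} (hp : 2 ≤ p) {u : ℝ} (hu : 0 ≤ u) (K : ℕ) :
    ∃ i, K ≤ i ∧ digitsOf p u i ≠ p - 1 := by
  by_contra! hall
  set N : ℕ → ℕ := fun t => ⌊u * (p : ℝ) ^ (K + t)⌋₊ with hN
  -- a run of digits `p - 1` from position `K` on would force `u * p ^ K = N 0 + 1`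
  have hrun : ∀ t, N t + 1 = p ^ t * (N 0 + 1) := by
    intro t
    induction t with
    | zero => simp
    | succ t ih =>
      have hdiv : N (t + 1) / p = N t := by
        simpa [hN, ← Nat.add_assoc] using floor_mul_pow_add_div p u (K + t) 1 (by omega)
      have hmod : N (t + 1) % p = p - 1 := by
        simpa [hN, digitsOf_eq_floor_mod, ← Nat.add_assoc] using hall (K + t) (by omega)
      have := Nat.div_add_mod (N (t + 1)) p
      rw [hdiv, hmod] at this
      rw [pow_succ, mul_comm _ p, mul_assoc, ← ih, Nat.mul_succ]
      omega
  have hlt : u * (p : ℝ) ^ K < N 0 + 1 := by simpa [hN] using Nat.lt_floor_add_one _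
  obtain ⟨t, ht⟩ := pow_unbounded_of_one_lt (1 / ((N 0 : ℝ) + 1 - u * (p : ℝ) ^ K))
    (show (1 : ℝ) < p by exact_mod_cast (show 1 < p by omega))
  have hle : (N t : ℝ) ≤ u * (p : ℝ) ^ K * (p : ℝ) ^ t := by
    rw [mul_assoc, ← pow_add]; exact Nat.floor_le (by positivity)
  have hcast : (N t : ℝ) + 1 = (p : ℝ) ^ t * ((N 0 : ℝ) + 1) := by exact_mod_cast hrun t
  rw [div_lt_iff₀ (by linarith)] at ht
  nlinarith

def revPrefixVal (p : ℕ) (a : ℕ → ℕ) : ℕ → ℕ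
  | 0 => 0
  | L + 1 => p * revPrefixVal p a L + a L

theorem revPrefixVal_lt {p : ℕ} {a : ℕ → ℕ} {L : ℕ} (ha : ∀ i < L, a i < p) :
    revPrefixVal p a L < p ^ L := by
  induction L with
  | zero => simp [revPrefixVal]
  | succ L ih =>
    have := ih fun i hi => ha i (by omega)
    rw [revPrefixVal, pow_succ]
    nlinarith [ha L (by omega)]

theorem revPrefixVal_div_pow_mod {p : ℕ} (hp : 0 < p) {a : ℕ → ℕ} {L : ℕ}
    (ha : ∀ i < L, a i < p) {i : ℕ} (hi : i < L) :
    revPrefixVal p a L / p ^ (L - 1 - i) % p = a i := by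
  induction L with
  | zero => omega
  | succ L ih =>
    rw [revPrefixVal]
    rcases Nat.lt_or_ge i L with hiL | hiL
    · rw [show L + 1 - 1 - i = (L - 1 - i) + 1 by omega, pow_succ', ← Nat.div_div_eq_div_mul,
        Nat.mul_add_div hp, Nat.div_eq_of_lt (ha L (by omega)), Nat.add_zero]
      exact ih (fun j hj => ha j (by omega)) hiL
    · obtain rfl : i = L := by omega
      rw [show i + 1 - 1 - i = 0 by omega, pow_zero, Nat.div_one, Nat.mul_add_mod,
        Nat.mod_eq_of_lt (ha i (by omega))]

theorem prefixVal_digits {p : ℕ} (n L : ℕ) :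
    prefixVal p (fun i => n / p ^ i % p) L = n % p ^ L := by
  induction L with
  | zero => simp [prefixVal, Nat.mod_one]
  | succ L ih =>
    rw [prefixVal_succ, ih, pow_succ, Nat.mod_mul, mul_comm]

theorem measurable_digitsOf (p : ℕ) : Measurable (digitsOf p) :=
  measurable_pi_lambda _ fun _ =>
    (measurable_of_countable fun z : ℤ => z.toNat % p).comp
      (Int.measurable_floor.comp (measurable_id.mul_const _))

theorem measurable_firstNot (p : ℕ) : Measurable (firstNot p) := by
  classical
  -- letting every `k` witness the constant sequence `p - 1`, where `sInf ∅ = 0`,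
  -- makes `firstNot` a `Nat.find`
  have hex : ∀ x : ℕ → ℕ, ∃ k, x k ≠ p - 1 ∨ ∀ i, x i = p - 1 := fun x => by
    by_cases h : ∀ i, x i = p - 1
    · exact ⟨0, .inr h⟩
    · push Not at h
      exact h.imp fun _ => .inl
  have hfind : firstNot p = fun x => Nat.find (hex x) := by
    funext x
    by_cases h : ∀ i, x i = p - 1
    · rw [show firstNot p x = 0 by simp [firstNot, h], eq_comm, Nat.find_eq_zero]
      exact .inr h
    · have hset : {i | x i ≠ p - 1} = {k | x k ≠ p - 1 ∨ ∀ i, x i = p - 1} := by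
        ext k; simp [h]
      rw [firstNot, hset]
      exact le_antisymm (Nat.sInf_le (Nat.find_spec (hex x)))
        (Nat.find_min' _ (Nat.sInf_mem (hex x)))
  rw [hfind]
  refine measurable_find hex fun k => ?_
  simp only [Set.ofPred_or, Set.ofPred_forall]
  exact ((measurableSet_singleton (p - 1)).preimage (measurable_pi_apply k)).compl.union
    (.iInter fun i => (measurableSet_singleton (p - 1)).preimage (measurable_pi_apply i))

theorem measurable_phi (p : ℕ) : Measurable (phi p) :=
  (measurable_from_prod_countable_left (f := fun q : (ℕ → ℕ) × ℕ => q.1 q.2)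
    fun k => measurable_pi_apply k).comp
    (measurable_id.prodMk (measurable_firstNot p))

theorem measurable_odo (p : ℕ) : Measurable (odo p) :=
  measurable_pi_lambda _ fun i =>
    (measurable_from_prod_countable_left (f := fun q : (ℕ → ℕ) × ℕ =>
        if i < q.2 then 0 else if i = q.2 then q.1 i + 1 else q.1 i)
      fun k => by dsimp only; split_ifs <;> fun_prop).comp
      (measurable_id.prodMk (measurable_firstNot p))

theorem measurable_phiSum (p m : ℕ) : Measurable (phiSum p m) :=
  Finset.measurable_sum _ fun j _ => (measurable_phi p).comp ((measurable_odo p).iterate j)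

theorem exists_phiSum_digitsOf_eq {p : ℕ} (hp : 2 ≤ p) (m : ℕ) {u : ℝ} (hu : 0 ≤ u) :
    ∃ n, phiSum p m (digitsOf p u) = phiNatSum p n m := by
  -- a digit `≠ p - 1` at a position `i` with `m < p ^ i` keeps `m` odometer steps inside
  -- the first `i + 1` digits
  obtain ⟨i, hi, hne⟩ := exists_digitsOf_ne hp hu (m + 1)
  have hdig : ∀ j < i + 1, digitsOf p u j < p := fun j _ => digitsOf_lt (by omega) u j
  have hm : m < p ^ i :=
    (Nat.lt_pow_self (by omega)).trans_le (Nat.pow_le_pow_right (by omega) (by omega))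
  have hlow := prefixVal_lt fun j (hj : j < i) => hdig j (by omega)
  have htop : digitsOf p u i + 2 ≤ p := by have := hdig i (by omega); omega
  refine ⟨_, phiSum_eq_phiNatSum hp hdig ?_⟩
  rw [prefixVal_succ, pow_succ]
  nlinarith

theorem digitsOf_eq_of_mem_Ico {p : ℕ} (hp : 0 < p) {a : ℕ → ℕ} {L : ℕ} (ha : ∀ i < L, a i < p)
    {u : ℝ} (hu : u ∈ Set.Ico ((revPrefixVal p a L : ℝ) / (p : ℝ) ^ L)
      (((revPrefixVal p a L : ℝ) + 1) / (p : ℝ) ^ L))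
    {i : ℕ} (hi : i < L) : digitsOf p u i = a i := by
  have hpL : (0 : ℝ) < (p : ℝ) ^ L := by positivity
  have hfloor : ⌊u * (p : ℝ) ^ L⌋₊ = revPrefixVal p a L := by
    rw [Nat.floor_eq_iff (mul_nonneg ((div_nonneg (Nat.cast_nonneg _) hpL.le).trans hu.1) hpL.le),
      ← div_le_iff₀ hpL, ← lt_div_iff₀ hpL]
    exact hu
  rw [digitsOf_eq_of_floor_eq hp.ne' hfloor hi, revPrefixVal_div_pow_mod hp ha hi]

theorem pim_phiNatSum_ne_zero {p : ℕ} (hp : 2 ≤ p) (n m : ℕ) : pim p m (phiNatSum p n m) ≠ 0 := by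
  -- the orbit of `n` is followed by every `u` whose first `n + m` digits spell `n` backwards
  set L := n + m
  have hnL : n + m < p ^ L := Nat.lt_pow_self (by omega)
  set a : ℕ → ℕ := fun i => n / p ^ i % p
  have ha : ∀ i < L, a i < p := fun i _ => Nat.mod_lt _ (by omega)
  have hpL : (0 : ℝ) < (p : ℝ) ^ L := by positivity
  have hR : (revPrefixVal p a L : ℝ) + 1 ≤ (p : ℝ) ^ L := by exact_mod_cast revPrefixVal_lt ha
  set I := Set.Ico ((revPrefixVal p a L : ℝ) / (p : ℝ) ^ L)
    (((revPrefixVal p a L : ℝ) + 1) / (p : ℝ) ^ L)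
  have hI : I ⊆ digitsOf p ⁻¹' {x | phiSum p m x = phiNatSum p n m} ∩ Set.Ico 0 1 := by
    intro u hu
    have hdig : ∀ i < L, digitsOf p u i = a i := fun i hi =>
      digitsOf_eq_of_mem_Ico (by omega) ha hu hi
    have hval : prefixVal p (digitsOf p u) L = n := by
      rw [prefixVal_congr hdig, prefixVal_digits, Nat.mod_eq_of_lt (by omega)]
    refine ⟨?_, (div_nonneg (Nat.cast_nonneg _) hpL.le).trans hu.1,
      hu.2.trans_le ((div_le_one hpL).mpr hR)⟩
    rw [Set.mem_preimage, Set.mem_ofPred_eq, ← hval]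
    exact phiSum_eq_phiNatSum hp (fun i hi => hdig i hi ▸ ha i hi) (by omega)
  have hvol : 0 < volume I := by
    rw [Real.volume_Ico, ENNReal.ofReal_pos, ← sub_div]
    simpa using hpL
  refine (hvol.trans_le ?_).ne'
  calc volume I ≤ volume (digitsOf p ⁻¹' {x | phiSum p m x = phiNatSum p n m} ∩ Set.Ico 0 1) :=
        measure_mono hI
    _ ≤ volume.restrict (Set.Ico 0 1) (digitsOf p ⁻¹' {x | phiSum p m x = phiNatSum p n m}) :=
        Measure.le_restrict_apply _ _
    _ ≤ pim p m (phiNatSum p n m) := Measure.le_map_apply (measurable_digitsOf p).aemeasurable _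

theorem pim_eq_zero {p : ℕ} (hp : 2 ≤ p) {m j : ℕ} (hj : ∀ n, phiNatSum p n m ≠ j) :
    pim p m j = 0 := by
  have hS : MeasurableSet {x | phiSum p m x = j} :=
    measurable_phiSum p m (measurableSet_singleton j)
  rw [pim, lam, Measure.map_apply (measurable_digitsOf p) hS,
    Measure.restrict_apply (measurable_digitsOf p hS)]
  refine measure_mono_null (fun u ⟨hu, hu01⟩ => ?_) measure_empty
  obtain ⟨n, hn⟩ := exists_phiSum_digitsOf_eq hp m hu01.1
  exact hj n (hn.symm.trans hu)

theorem d_eq_dNat {p : ℕ} (hp : 2 ≤ p) (m : ℕ) : d p m = dNat p m := by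
  have hsupp : {j | pim p m j ≠ 0} = Set.range fun n => phiNatSum p n m := by
    ext j
    refine ⟨fun hj => ?_, ?_⟩
    · by_contra hrange
      exact hj (pim_eq_zero hp fun n hn => hrange ⟨n, hn⟩)
    · rintro ⟨n, rfl⟩
      exact pim_phiNatSum_ne_zero hp n m
  rw [d, dNat, hsupp]

/-- `d_{pm} = m Δ_{p-2} + d_m`, and for `0 < k < p`,
`d_{pm+k} = m Δ_{p-2} + Δ_{k-2} + d_m + min{k-1, d_{m+1} - d_m}`. -/
theorem statement_16 (p : ℕ) (hp : 3 ≤ p) (m : ℕ) :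
    d p (p * m) = m * tri (p - 2) + d p m ∧
    (∀ k : ℕ, 0 < k → k < p →
      d p (p * m + k) =
        m * tri (p - 2) + tri (k - 2) + d p m +
          min (k - 1) (d p (m + 1) - d p m)) := by
  have hp2 : 2 ≤ p := by omega
  simp only [d_eq_dNat hp2]
  refine ⟨dNat_mul hp2 m, fun k hk hkp => ?_⟩
  rw [dNat_mul_add hp2 m hk hkp, tri_sub_one hk]
  have := dNat_le_dNat_succ p m
  omega

end Chacon
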